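/- Let n ≥ 2 be an integer. For all real x with −1/2 < x < 1/2, one has 2·Σ_{n−2}(x)² ≥ Σ_{n−1}(x)·Σ_{n−3}(x). -/

import Mathlib

open Finset

/-- `Σ_i(x) = ∑_{P ⊆ {1,…,n}, |P| = i} ∏_{j ∈ P} (x² − (j−1/2)²)`, with `Σ_i = 0` for `i < 0`. -/
noncomputable def Sig (n : ℕ) (i : ℤ) (x : ℝ) : ℝ :=
  if 0 ≤ i then
    ∑ P ∈ (Finset.Icc 1 n).powersetCard i.toNat, ∏ j ∈ P, (x ^ 2 - ((j : ℝ) - 1 / 2) ^ 2)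
  else 0

/-!
With `d_j = (j - 1/2)² - x²`, which is positive for `|x| < 1/2`, complementing subsets gives
`Σ_{n-k}(x) = (-1)^(n+k) (∏ d_j) e_k(1/d_1, …, 1/d_n)`, where `e_k` is the `k`-th elementary
symmetric function (and both sides vanish for `k > n`). The claim thus reduces to
`e_1 e_3 ≤ e_2²` for nonnegative reals, which follows by induction on the number of variables
together with `e_2 ≤ e_1²` and `e_3 ≤ e_1 e_2`.
-/

namespace Multiset

variable {R : Type*}

theorem esymm_cons_succ [CommSemiring R] (a : R) (s : Multiset R) (k : ℕ) :
    (a ::ₘ s).esymm (k + 1) = s.esymm (k + 1) + a * s.esymm k := by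
  simp only [esymm, powersetCard_cons, map_add, sum_add, map_map, Function.comp_def, prod_cons,
    sum_map_mul_left]

theorem esymm_zero [CommSemiring R] (s : Multiset R) : s.esymm 0 = 1 := by
  simp [esymm]

theorem esymm_eq_zero_of_card_lt [CommSemiring R] {s : Multiset R} {k : ℕ} (h : card s < k) :
    s.esymm k = 0 := by
  simp [esymm, powersetCard_eq_empty k h]

section Ordered

variable [CommRing R] [LinearOrder R] [IsStrictOrderedRing R]

theorem esymm_nonneg {s : Multiset R} (hs : ∀ a ∈ s, 0 ≤ a) (k : ℕ) : 0 ≤ s.esymm k :=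
  sum_nonneg fun _ hP ↦ by
    obtain ⟨P, hPs, rfl⟩ := mem_map.mp hP
    exact prod_nonneg fun a ha ↦ hs a (mem_of_le (mem_powersetCard.mp hPs).1 ha)

theorem esymm_two_le_sq_esymm_one {s : Multiset R} (hs : ∀ a ∈ s, 0 ≤ a) :
    s.esymm 2 ≤ s.esymm 1 ^ 2 := by
  induction s using Multiset.induction with
  | empty => simp [esymm, powersetCard_zero_right]
  | cons a s ih =>
    have ha : 0 ≤ a := hs a (mem_cons_self a s)
    have hs' : ∀ b ∈ s, 0 ≤ b := fun b hb ↦ hs b (mem_cons_of_mem hb)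
    have h1 := esymm_nonneg hs' 1
    rw [esymm_cons_succ, esymm_cons_succ, esymm_zero]
    linarith [ih hs', mul_nonneg ha h1, mul_self_nonneg a]

theorem esymm_three_le_esymm_one_mul_esymm_two {s : Multiset R} (hs : ∀ a ∈ s, 0 ≤ a) :
    s.esymm 3 ≤ s.esymm 1 * s.esymm 2 := by
  induction s using Multiset.induction with
  | empty => simp [esymm, powersetCard_zero_right]
  | cons a s ih =>
    have ha : 0 ≤ a := hs a (mem_cons_self a s)
    have hs' : ∀ b ∈ s, 0 ≤ b := fun b hb ↦ hs b (mem_cons_of_mem hb)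
    have h1 := esymm_nonneg hs' 1
    rw [esymm_cons_succ, esymm_cons_succ, esymm_cons_succ, esymm_zero]
    linarith [ih hs', mul_nonneg ha (mul_nonneg h1 h1), mul_nonneg (mul_nonneg ha ha) h1]

theorem esymm_one_mul_esymm_three_le_sq_esymm_two {s : Multiset R} (hs : ∀ a ∈ s, 0 ≤ a) :
    s.esymm 1 * s.esymm 3 ≤ s.esymm 2 ^ 2 := by
  induction s using Multiset.induction with
  | empty => simp [esymm, powersetCard_zero_right]
  | cons a s ih =>
    have ha : 0 ≤ a := hs a (mem_cons_self a s)
    have hs' : ∀ b ∈ s, 0 ≤ b := fun b hb ↦ hs b (mem_cons_of_mem hb)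
    rw [esymm_cons_succ, esymm_cons_succ, esymm_cons_succ, esymm_zero]
    linarith [ih hs', mul_le_mul_of_nonneg_left (esymm_three_le_esymm_one_mul_esymm_two hs') ha,
      mul_le_mul_of_nonneg_left (esymm_two_le_sq_esymm_one hs') (mul_nonneg ha ha)]

end Ordered

end Multiset

namespace Finset

variable {ι : Type*} [DecidableEq ι]

theorem sum_powersetCard_card_sub {β : Type*} [AddCommMonoid β] (s : Finset ι)
    (g : Finset ι → β) {k : ℕ} (hk : k ≤ #s) :
    ∑ P ∈ s.powersetCard (#s - k), g P = ∑ Q ∈ s.powersetCard k, g (s \ Q) := by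
  refine sum_nbij' (s \ ·) (s \ ·) ?_ ?_ ?_ ?_ ?_
  · intro P hP
    rw [mem_powersetCard] at hP ⊢
    exact ⟨sdiff_subset, by rw [card_sdiff_of_subset hP.1, hP.2]; omega⟩
  · intro Q hQ
    rw [mem_powersetCard] at hQ ⊢
    exact ⟨sdiff_subset, by rw [card_sdiff_of_subset hQ.1, hQ.2]⟩
  · intro P hP
    exact sdiff_sdiff_eq_self (mem_powersetCard.mp hP).1
  · intro Q hQ
    exact sdiff_sdiff_eq_self (mem_powersetCard.mp hQ).1
  · intro P hP
    rw [sdiff_sdiff_eq_self (mem_powersetCard.mp hP).1]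

theorem sum_powersetCard_card_sub_prod {K : Type*} [Field K] (s : Finset ι) {f : ι → K}
    (hf : ∀ i ∈ s, f i ≠ 0) {k : ℕ} (hk : k ≤ #s) :
    ∑ P ∈ s.powersetCard (#s - k), ∏ i ∈ P, f i =
      (∏ i ∈ s, f i) * (s.val.map fun i ↦ (f i)⁻¹).esymm k := by
  rw [sum_powersetCard_card_sub s _ hk, esymm_map_val, mul_sum]
  refine sum_congr rfl fun Q hQ ↦ ?_
  have hQs := (mem_powersetCard.mp hQ).1
  rw [← prod_sdiff hQs, prod_inv_distrib, mul_assoc, mul_inv_cancel₀, mul_one]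
  exact prod_ne_zero_iff.mpr fun i hi ↦ hf i (hQs hi)

end Finset

theorem Sig_natCast_sub (n k : ℕ) (x : ℝ) (hx : ∀ j ∈ Icc 1 n, ((j : ℝ) - 1 / 2) ^ 2 - x ^ 2 ≠ 0) :
    Sig n ((n : ℤ) - k) x = (-1) ^ (n + k) * ((∏ j ∈ Icc 1 n, (((j : ℝ) - 1 / 2) ^ 2 - x ^ 2)) *
      ((Icc 1 n).val.map fun j : ℕ ↦ (((j : ℝ) - 1 / 2) ^ 2 - x ^ 2)⁻¹).esymm k) := by
  have hcard : #(Icc 1 n) = n := by simp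
  rcases le_or_gt k n with hk | hk
  · rw [Sig, if_pos (by omega), show ((n : ℤ) - k).toNat = #(Icc 1 n) - k by omega,
      ← sum_powersetCard_card_sub_prod _ hx (by rw [hcard]; exact hk), mul_sum]
    refine sum_congr rfl fun P hP ↦ ?_
    have hsign : (-1 : ℝ) ^ (n + k) = (-1) ^ #P := by
      rw [(mem_powersetCard.mp hP).2, hcard, show n + k = n - k + 2 * k by omega, pow_add, pow_mul,
        neg_one_sq, one_pow, mul_one]
    rw [hsign, ← prod_neg]
    exact prod_congr rfl fun j _ ↦ by ring
  · rw [Sig, if_neg (by omega), Multiset.esymm_eq_zero_of_card_lt (by simpa using hk),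
      mul_zero, mul_zero]

theorem stmt2_general (n : ℕ) (x : ℝ) (hx : x ∈ Set.Ioo (-(1 / 2) : ℝ) (1 / 2)) :
    2 * (Sig n ((n : ℤ) - 2) x) ^ 2 ≥ Sig n ((n : ℤ) - 1) x * Sig n ((n : ℤ) - 3) x := by
  have hgap : ∀ j ∈ Icc 1 n, 0 < ((j : ℝ) - 1 / 2) ^ 2 - x ^ 2 := by
    intro j hj
    have hj : (1 : ℝ) ≤ j := by exact_mod_cast (mem_Icc.mp hj).1
    nlinarith [hx.1, hx.2]
  have hSig := fun k ↦ Sig_natCast_sub n k x fun j hj ↦ (hgap j hj).ne'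
  have h1 := hSig 1
  have h2 := hSig 2
  have h3 := hSig 3
  push_cast at h1 h2 h3
  set D := ∏ j ∈ Icc 1 n, (((j : ℝ) - 1 / 2) ^ 2 - x ^ 2)
  set s := (Icc 1 n).val.map fun j : ℕ ↦ (((j : ℝ) - 1 / 2) ^ 2 - x ^ 2)⁻¹
  have hs : ∀ a ∈ s, 0 ≤ a := by
    intro a ha
    obtain ⟨j, hj, rfl⟩ := Multiset.mem_map.mp ha
    exact (inv_pos.mpr (hgap j hj)).le
  have hsign₁₃ : (-1 : ℝ) ^ (n + 1) * (-1) ^ (n + 3) = 1 := by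
    rw [← pow_add]; exact Even.neg_one_pow ⟨n + 2, by ring⟩
  have hsign₂ : ((-1 : ℝ) ^ (n + 2)) ^ 2 = 1 := by
    rw [← pow_mul]; exact Even.neg_one_pow ⟨n + 2, by ring⟩
  calc Sig n ((n : ℤ) - 1) x * Sig n ((n : ℤ) - 3) x = D ^ 2 * (s.esymm 1 * s.esymm 3) := by
        rw [h1, h3]; linear_combination (D ^ 2 * (s.esymm 1 * s.esymm 3)) * hsign₁₃
    _ ≤ D ^ 2 * s.esymm 2 ^ 2 :=
        mul_le_mul_of_nonneg_left (Multiset.esymm_one_mul_esymm_three_le_sq_esymm_two hs) (sq_nonneg D)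
    _ = Sig n ((n : ℤ) - 2) x ^ 2 := by rw [h2, mul_pow, hsign₂, one_mul, mul_pow]
    _ ≤ 2 * Sig n ((n : ℤ) - 2) x ^ 2 := by linarith [sq_nonneg (Sig n ((n : ℤ) - 2) x)]

theorem stmt2 (n : ℕ) (hn : 2 ≤ n) (x : ℝ) (hx : x ∈ Set.Ioo (-(1 / 2) : ℝ) (1 / 2)) :
    2 * (Sig n ((n : ℤ) - 2) x) ^ 2 ≥ Sig n ((n : ℤ) - 1) x * Sig n ((n : ℤ) - 3) x :=
  stmt2_general n x hx
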